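/- arXiv:2105.10432 — 3 statements merged into one kernel-verified Lean document; each statement's English description precedes it below -/
import Mathlib

section
/- Let A be self-adjoint positive definite with eigenvalues λ_k. If |r(λ) − f(λ)^{-1}| ≤ ε f(λ)^{-1} for all eigenvalues λ of A, then ũ = r(A)φ satisfies both ‖ũ − u‖_{f(A)} ≤ ε ‖φ‖_{f(A)^{-1}} and ‖ũ − u‖ ≤ ε ‖φ‖_{f(A)^{-2}}, where u = f(A)^{-1}φ. -/
open scoped RealInnerProductSpace

open Finset

/-!
Expand everything in the eigenbasis `ψ`. The `k`-th coefficient of `ũ - u` is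
`(r(λ_k) - f(λ_k)⁻¹) ⟪φ, ψ_k⟫`, whose square is at most `ε² f(λ_k)⁻² ⟪φ, ψ_k⟫²` by hypothesis.
Summing with weights `f(λ_k)` (the `f(A)`-norm) or `1` (Parseval) gives both estimates.
-/

theorem sqrt_sum_mul_sq_le_of_abs_le {ι : Type*} (s : Finset ι) {w d g a : ι → ℝ} {ε : ℝ}
    (hw : ∀ k ∈ s, 0 ≤ w k) (hg : ∀ k ∈ s, 0 < g k) (hd : ∀ k ∈ s, |d k| ≤ ε * g k) :
    √(∑ k ∈ s, w k * (d k * a k) ^ 2) ≤ ε * √(∑ k ∈ s, w k * g k ^ 2 * a k ^ 2) := by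
  rcases s.eq_empty_or_nonempty with rfl | ⟨k₀, hk₀⟩
  · simp
  have hε : 0 ≤ ε := nonneg_of_mul_nonneg_left ((abs_nonneg _).trans (hd k₀ hk₀)) (hg k₀ hk₀)
  have hsum : ∑ k ∈ s, w k * (d k * a k) ^ 2 ≤ ε ^ 2 * ∑ k ∈ s, w k * g k ^ 2 * a k ^ 2 := by
    rw [mul_sum]
    refine sum_le_sum fun k hk => ?_
    have hd_sq : d k ^ 2 ≤ (ε * g k) ^ 2 := sq_le_sq' (abs_le.1 (hd k hk)).1 (abs_le.1 (hd k hk)).2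
    calc w k * (d k * a k) ^ 2 = w k * a k ^ 2 * d k ^ 2 := by ring
      _ ≤ w k * a k ^ 2 * (ε * g k) ^ 2 := by gcongr; exact mul_nonneg (hw k hk) (sq_nonneg _)
      _ = ε ^ 2 * (w k * g k ^ 2 * a k ^ 2) := by ring
  calc √(∑ k ∈ s, w k * (d k * a k) ^ 2)
      ≤ √(ε ^ 2 * ∑ k ∈ s, w k * g k ^ 2 * a k ^ 2) := Real.sqrt_le_sqrt hsum
    _ = ε * √(∑ k ∈ s, w k * g k ^ 2 * a k ^ 2) := by
      rw [Real.sqrt_mul (sq_nonneg ε), Real.sqrt_sq hε]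

theorem OrthonormalBasis.inner_sum_smul_inner_smul {ι H : Type*} [Fintype ι] [DecidableEq ι]
    [NormedAddCommGroup H] [InnerProductSpace ℝ H] (b : OrthonormalBasis ι ℝ H) (c : ι → ℝ)
    (x : H) (j : ι) : ⟪∑ k, c k • (⟪x, b k⟫ • b k), b j⟫ = c j * ⟪x, b j⟫ := by
  simp [sum_inner, real_inner_smul_left, orthonormal_iff_ite.mp b.orthonormal]

theorem stmt3_general
    {H : Type*} [NormedAddCommGroup H] [InnerProductSpace ℝ H]
    (K : ℕ) (ψ : OrthonormalBasis (Fin K) ℝ H) (lam : Fin K → ℝ)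
    (f r : ℝ → ℝ) (hf : ∀ k, 0 < f (lam k))
    (ε : ℝ) (happrox : ∀ k, |r (lam k) - (f (lam k))⁻¹| ≤ ε * (f (lam k))⁻¹)
    (φ u utilde : H)
    (hu : u = ∑ k, (f (lam k))⁻¹ • (⟪φ, ψ k⟫ • ψ k))
    (hut : utilde = ∑ k, r (lam k) • (⟪φ, ψ k⟫ • ψ k)) :
    Real.sqrt (∑ k, f (lam k) * ⟪utilde - u, ψ k⟫ ^ 2)
      ≤ ε * Real.sqrt (∑ k, (f (lam k))⁻¹ * ⟪φ, ψ k⟫ ^ 2) ∧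
    ‖utilde - u‖ ≤ ε * Real.sqrt (∑ k, ((f (lam k)) ^ 2)⁻¹ * ⟪φ, ψ k⟫ ^ 2) := by
  have hcoef (k : Fin K) :
      ⟪utilde - u, ψ k⟫ = (r (lam k) - (f (lam k))⁻¹) * ⟪φ, ψ k⟫ := by
    rw [inner_sub_left, hut, hu, ψ.inner_sum_smul_inner_smul, ψ.inner_sum_smul_inner_smul,
      sub_mul]
  have hg : ∀ k ∈ univ, 0 < (f (lam k))⁻¹ := fun k _ => inv_pos.2 (hf k)
  have hd : ∀ k ∈ univ, |r (lam k) - (f (lam k))⁻¹| ≤ ε * (f (lam k))⁻¹ := fun k _ => happrox k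
  simp_rw [hcoef]
  constructor
  · have hf_mul_inv_sq (k : Fin K) : f (lam k) * (f (lam k))⁻¹ ^ 2 = (f (lam k))⁻¹ := by
      field_simp [(hf k).ne']
    have h := sqrt_sum_mul_sq_le_of_abs_le univ (fun k _ => (hf k).le) hg hd
      (a := fun k => ⟪φ, ψ k⟫)
    simp only [hf_mul_inv_sq] at h
    exact h
  · rw [← Real.sqrt_sq (norm_nonneg _), ← ψ.sum_sq_inner_left]
    simpa [hcoef, inv_pow] using sqrt_sum_mul_sq_le_of_abs_le univ (w := 1)
      (fun k _ => zero_le_one) hg hd (a := fun k => ⟪φ, ψ k⟫)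

/-- Relative-error approximation: if `|r(λ) − f(λ)⁻¹| ≤ ε f(λ)⁻¹` on the spectrum, then
`‖ũ − u‖_{f(A)} ≤ ε ‖φ‖_{f(A)⁻¹}` and `‖ũ − u‖ ≤ ε ‖φ‖_{f(A)^{-2}}`. -/
theorem stmt3
    {H : Type*} [NormedAddCommGroup H] [InnerProductSpace ℝ H] [FiniteDimensional ℝ H]
    (K : ℕ) (ψ : OrthonormalBasis (Fin K) ℝ H) (lam : Fin K → ℝ)
    (f r : ℝ → ℝ) (hf : ∀ k, 0 < f (lam k))
    (ε : ℝ) (happrox : ∀ k, |r (lam k) - (f (lam k))⁻¹| ≤ ε * (f (lam k))⁻¹)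
    (φ u utilde : H)
    (hu : u = ∑ k, (f (lam k))⁻¹ • (⟪φ, ψ k⟫ • ψ k))
    (hut : utilde = ∑ k, r (lam k) • (⟪φ, ψ k⟫ • ψ k)) :
    Real.sqrt (∑ k, f (lam k) * ⟪utilde - u, ψ k⟫ ^ 2)
      ≤ ε * Real.sqrt (∑ k, (f (lam k))⁻¹ * ⟪φ, ψ k⟫ ^ 2) ∧
    ‖utilde - u‖ ≤ ε * Real.sqrt (∑ k, ((f (lam k)) ^ 2)⁻¹ * ⟪φ, ψ k⟫ ^ 2) :=
  stmt3_general K ψ lam f r hf ε happrox φ u utilde hu hut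
end

section
/- For 0 < α < 1 and λ > 0, the change of variables θ = η^{1/(1−α)}(1−η)^{−κ/α} with κ > 1 transforms the Balakrishnan formula into λ^{−α} = (sin(πα)/((1−α)π)) ∫₀¹ (1−η)^{κ−1} (1 + (κ(1−α)/α − 1)η) (η^{1/(1−α)} + (1−η)^{κ/α} λ)^{−1} dη. -/
/-!
The Beta integral `∫₀¹ t^{-α} (1-t)^{α-1} dt = Γ(1-α) Γ(α) = π / sin(πα)` is transformed by the
increasing bijection `t = η^p / (η^p + λ(1-η)^q)` of `(0,1)`, with `p = 1/(1-α)` and `q = κ/α`;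
this is the paper's substitution `θ = η^p (1-η)^{-q}` composed with `t = θ/(θ+λ)`, which turns the
Beta integral into Balakrishnan's `∫₀^∞ θ^{-α} (θ+λ)⁻¹ dθ`. For this choice of exponents the
Jacobian cancels the power of `η` and leaves exactly the integrand of the theorem, times
`λ^α / (1-α)`.
-/

open Real MeasureTheory Set

theorem integral_Ioo_rpow_neg_mul_one_sub_rpow_sub_one {a : ℝ} (h0 : 0 < a) (h1 : a < 1) :
    ∫ t in Ioo (0:ℝ) 1, t ^ (-a) * (1 - t) ^ (a - 1) = π / sin (π * a) := by
  have hbeta : Complex.betaIntegral ((1 - a : ℝ) : ℂ) ((a : ℝ) : ℂ)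
      = ((π / sin (π * a) : ℝ) : ℂ) := by
    have h := Complex.Gamma_mul_Gamma_eq_betaIntegral
      (s := ((1 - a : ℝ) : ℂ)) (t := ((a : ℝ) : ℂ)) (by simpa using h1) (by simpa using h0)
    rw [show ((1 - a : ℝ) : ℂ) + ((a : ℝ) : ℂ) = 1 by push_cast; ring, Complex.Gamma_one,
      one_mul] at h
    rw [← h, Complex.Gamma_ofReal, Complex.Gamma_ofReal, ← Complex.ofReal_mul, mul_comm,
      Real.Gamma_mul_Gamma_one_sub a]
  have hint : Complex.betaIntegral ((1 - a : ℝ) : ℂ) ((a : ℝ) : ℂ)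
      = ((∫ t in Ioo (0:ℝ) 1, t ^ (-a) * (1 - t) ^ (a - 1) : ℝ) : ℂ) := by
    rw [Complex.betaIntegral, intervalIntegral.integral_of_le zero_le_one,
      integral_Ioc_eq_integral_Ioo]
    refine Eq.trans ?_ integral_complex_ofReal
    refine setIntegral_congr_fun measurableSet_Ioo fun x ⟨hx0, hx1⟩ => ?_
    rw [show ((1 - a : ℝ) : ℂ) - 1 = ((-a : ℝ) : ℂ) by push_cast; ring,
      show ((a : ℝ) : ℂ) - 1 = ((a - 1 : ℝ) : ℂ) by push_cast; ring,
      show (1 : ℂ) - (x : ℂ) = ((1 - x : ℝ) : ℂ) by push_cast; ring,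
      ← Complex.ofReal_cpow hx0.le, ← Complex.ofReal_cpow (by linarith), ← Complex.ofReal_mul]
  exact_mod_cast hint.symm.trans hbeta

section BetaSubst

variable {p q c : ℝ}

noncomputable def betaSubst (p q c x : ℝ) : ℝ := x ^ p / (x ^ p + (1 - x) ^ q * c)

noncomputable def betaSubstDeriv (p q c x : ℝ) : ℝ :=
  c * x ^ (p - 1) * (1 - x) ^ (q - 1) * (p * (1 - x) + q * x) / (x ^ p + (1 - x) ^ q * c) ^ 2

theorem rpow_add_one_sub_rpow_mul_pos (hp : 0 < p) (hc : 0 < c) {x : ℝ}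
    (hx : x ∈ Icc (0:ℝ) 1) : 0 < x ^ p + (1 - x) ^ q * c := by
  rcases hx.1.eq_or_lt with rfl | hx0
  · simpa [zero_rpow hp.ne'] using hc
  · have := rpow_pos_of_pos hx0 p
    have := rpow_nonneg (sub_nonneg.2 hx.2) q
    positivity

theorem hasDerivAt_betaSubst (hp : 0 < p) (hc : 0 < c) {x : ℝ} (hx : x ∈ Ioo (0:ℝ) 1) :
    HasDerivAt (betaSubst p q c) (betaSubstDeriv p q c x) x := by
  obtain ⟨hx0, hx1⟩ := hx
  have hx1' : 0 < 1 - x := by linarith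
  have hA : HasDerivAt (fun y : ℝ => y ^ p) (p * x ^ (p - 1)) x :=
    hasDerivAt_rpow_const (Or.inl hx0.ne')
  have hB : HasDerivAt (fun y : ℝ => (1 - y) ^ q) (q * (1 - x) ^ (q - 1) * (0 - 1)) x :=
    (hasDerivAt_rpow_const (Or.inl hx1'.ne')).comp x ((hasDerivAt_const x 1).sub (hasDerivAt_id x))
  have hD := rpow_add_one_sub_rpow_mul_pos (q := q) hp hc ⟨hx0.le, hx1.le⟩
  refine (hA.div (hA.add (hB.mul_const c)) hD.ne').congr_deriv ?_
  simp only [Pi.add_apply, betaSubstDeriv, rpow_sub_one hx0.ne', rpow_sub_one hx1'.ne']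
  field_simp
  ring

theorem betaSubstDeriv_pos (hp : 0 < p) (hq : 0 < q) (hc : 0 < c) {x : ℝ}
    (hx : x ∈ Ioo (0:ℝ) 1) : 0 < betaSubstDeriv p q c x := by
  obtain ⟨hx0, hx1⟩ := hx
  have hx1' : 0 < 1 - x := by linarith
  have := rpow_pos_of_pos hx0 (p - 1)
  have := rpow_pos_of_pos hx1' (q - 1)
  have := rpow_add_one_sub_rpow_mul_pos (q := q) hp hc ⟨hx0.le, hx1.le⟩
  unfold betaSubstDeriv
  positivity

theorem continuousOn_betaSubst (hp : 0 < p) (hq : 0 < q) (hc : 0 < c) :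
    ContinuousOn (betaSubst p q c) (Icc 0 1) := by
  have hA := continuous_rpow_const hp.le
  have hB := (continuous_rpow_const hq.le).comp
    (continuous_const.sub continuous_id : Continuous fun x : ℝ => 1 - x)
  exact hA.continuousOn.div (hA.add (hB.mul continuous_const)).continuousOn
    fun x hx => (rpow_add_one_sub_rpow_mul_pos hp hc hx).ne'

theorem strictMonoOn_betaSubst (hp : 0 < p) (hq : 0 < q) (hc : 0 < c) :
    StrictMonoOn (betaSubst p q c) (Icc 0 1) := by
  refine strictMonoOn_of_deriv_pos (convex_Icc 0 1) (continuousOn_betaSubst hp hq hc) ?_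
  intro x hx
  rw [interior_Icc] at hx
  rw [(hasDerivAt_betaSubst hp hc hx).deriv]
  exact betaSubstDeriv_pos hp hq hc hx

theorem image_betaSubst_Ioo (hp : 0 < p) (hq : 0 < q) (hc : 0 < c) :
    betaSubst p q c '' Ioo 0 1 = Ioo 0 1 := by
  rw [(continuousOn_betaSubst hp hq hc).image_Ioo_of_strictMonoOn zero_le_one
    (strictMonoOn_betaSubst hp hq hc)]
  simp [betaSubst, zero_rpow hp.ne', zero_rpow hq.ne']

theorem betaSubstDeriv_mul_rpow (hp : 0 < p) (hc : 0 < c) (a : ℝ) {x : ℝ}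
    (hx : x ∈ Ioo (0:ℝ) 1) :
    betaSubstDeriv p q c x * (betaSubst p q c x ^ (-a) * (1 - betaSubst p q c x) ^ (a - 1))
      = c ^ a * (x ^ (p * (1 - a) - 1) * (1 - x) ^ (q * a - 1) * (p * (1 - x) + q * x)
          / (x ^ p + (1 - x) ^ q * c)) := by
  obtain ⟨hx0, hx1⟩ := hx
  have hx1' : 0 < 1 - x := by linarith
  set D := x ^ p + (1 - x) ^ q * c
  have hD : 0 < D := rpow_add_one_sub_rpow_mul_pos hp hc ⟨hx0.le, hx1.le⟩
  have hsubst : betaSubst p q c x = x ^ p / D := rfl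
  have hsubst' : 1 - betaSubst p q c x = (1 - x) ^ q * c / D := by
    rw [hsubst]
    field_simp
    ring
  have hx_exp : x ^ (p - 1) * (x ^ p) ^ (-a) = x ^ (p * (1 - a) - 1) := by
    rw [← rpow_mul hx0.le, ← rpow_add hx0]
    ring_nf
  have hx1_exp : (1 - x) ^ (q - 1) * ((1 - x) ^ q) ^ (a - 1) = (1 - x) ^ (q * a - 1) := by
    rw [← rpow_mul hx1'.le, ← rpow_add hx1']
    ring_nf
  have hc_exp : c * c ^ (a - 1) = c ^ a := by
    rw [mul_comm, ← rpow_add_one hc.ne', sub_add_cancel]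
  rw [hsubst', hsubst, betaSubstDeriv, div_rpow (rpow_nonneg hx0.le p) hD.le,
    div_rpow (by positivity) hD.le, mul_rpow (rpow_nonneg hx1'.le q) hc.le, ← hx_exp, ← hx1_exp,
    ← hc_exp, rpow_neg hD.le, rpow_sub_one hD.ne' a]
  field_simp
  ring

theorem integral_Ioo_rpow_mul_one_sub_rpow_mul_div (hp : 0 < p) (hq : 0 < q) (hc : 0 < c)
    {a : ℝ} (h0 : 0 < a) (h1 : a < 1) :
    ∫ x in Ioo (0:ℝ) 1, x ^ (p * (1 - a) - 1) * (1 - x) ^ (q * a - 1) * (p * (1 - x) + q * x)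
        / (x ^ p + (1 - x) ^ q * c)
      = c ^ (-a) * (π / sin (π * a)) := by
  have h := integral_image_eq_integral_deriv_smul_of_monotoneOn measurableSet_Ioo
    (fun x hx => (hasDerivAt_betaSubst hp hc hx).hasDerivWithinAt)
    ((strictMonoOn_betaSubst hp hq hc).monotoneOn.mono Ioo_subset_Icc_self)
    (fun t => t ^ (-a) * (1 - t) ^ (a - 1))
  simp only [smul_eq_mul] at h
  rw [image_betaSubst_Ioo hp hq hc, integral_Ioo_rpow_neg_mul_one_sub_rpow_sub_one h0 h1,
    setIntegral_congr_fun measurableSet_Ioo fun x hx => betaSubstDeriv_mul_rpow hp hc a hx,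
    integral_const_mul] at h
  rw [h, ← mul_assoc, rpow_neg hc.le, inv_mul_cancel₀ (rpow_pos_of_pos hc a).ne', one_mul]

end BetaSubst

/-- Transformed Balakrishnan formula on the unit interval: for `λ > 0`, `0 < α < 1`, `κ > 1`,
`λ^{−α} = (sin(πα)/((1−α)π)) ∫₀¹ (1−η)^{κ−1}(1+(κ(1−α)/α−1)η)(η^{1/(1−α)}+(1−η)^{κ/α}λ)⁻¹ dη`. -/
theorem stmt13
    (lam α κ : ℝ) (hlam : 0 < lam) (hα0 : 0 < α) (hα1 : α < 1) (hκ : 1 < κ) :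
    lam ^ (-α)
      = Real.sin (Real.pi * α) / ((1 - α) * Real.pi) *
          ∫ η in (0:ℝ)..1,
            (1 - η) ^ (κ - 1) * (1 + (κ * (1 - α) / α - 1) * η) *
              (η ^ ((1:ℝ) / (1 - α)) + (1 - η) ^ (κ / α) * lam)⁻¹ := by
  have h1α : 0 < 1 - α := by linarith
  have key := integral_Ioo_rpow_mul_one_sub_rpow_mul_div (p := 1 / (1 - α)) (q := κ / α)
    (by positivity) (by positivity) hlam hα0 hα1
  have hp_exp : 1 / (1 - α) * (1 - α) - 1 = 0 := by field_simp; ring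
  have hq_exp : κ / α * α - 1 = κ - 1 := by field_simp
  have hintegrand : (fun x : ℝ => x ^ (1 / (1 - α) * (1 - α) - 1) * (1 - x) ^ (κ / α * α - 1)
        * (1 / (1 - α) * (1 - x) + κ / α * x) / (x ^ (1 / (1 - α)) + (1 - x) ^ (κ / α) * lam))
      = fun η => (1 - α)⁻¹ * ((1 - η) ^ (κ - 1) * (1 + (κ * (1 - α) / α - 1) * η)
        * (η ^ ((1:ℝ) / (1 - α)) + (1 - η) ^ (κ / α) * lam)⁻¹) := by
    funext x
    rw [hp_exp, hq_exp, rpow_zero]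
    field_simp
    ring
  rw [hintegrand, integral_const_mul, inv_mul_eq_iff_eq_mul₀ h1α.ne'] at key
  have hsin : sin (π * α) ≠ 0 :=
    (sin_pos_of_pos_of_lt_pi (by positivity) (by nlinarith [pi_pos])).ne'
  rw [intervalIntegral.integral_of_le zero_le_one, integral_Ioc_eq_integral_Ioo, key]
  generalize sin (π * α) = s at hsin ⊢
  field_simp
end

section
/- Let A be self-adjoint positive definite on a finite-dimensional Hilbert space and r(A) = Σ_{i=1}^m a_i exp(−b_i A) with a_i, b_i > 0. If |r(λ) − f(λ)^{-1}| ≤ ε on σ(A) and approximations w̃_i of w_i = exp(−b_i(A−δI))φ satisfy ‖w̃_i − w_i‖ ≤ ε₀‖φ‖, then ũ̃ = Σ a_i exp(−b_i δ) w̃_i satisfies ‖ũ̃ − f(A)^{-1}φ‖ ≤ (ε + ε₀ r(δ)) ‖φ‖. -/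
open scoped RealInnerProductSpace

/-
Write `c i = a i * exp (-b i * δ)`. Since `c i * exp (-b i * (λ - δ)) = a i * exp (-b i * λ)`, the
exact combination `∑ c i • w i` is `r(A) φ`, so the error splits as `∑ c i • (w̃ i - w i)`, bounded
by `(∑ c i) ε₀ ‖φ‖ = r(δ) ε₀ ‖φ‖`, plus `(r(A) - f(A)⁻¹) φ`. The latter is diagonal in the
eigenbasis with multipliers bounded by `ε`, hence has norm at most `ε ‖φ‖` by Parseval.
-/

lemma Finset.sum_smul_sum_smul_comm {R M ι κ : Type*} [Semiring R] [AddCommMonoid M] [Module R M]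
    [Fintype ι] [Fintype κ] (c : ι → R) (e : ι → κ → R) (v : κ → M) :
    ∑ i, c i • ∑ k, e i k • v k = ∑ k, (∑ i, c i * e i k) • v k := by
  simp_rw [Finset.smul_sum, smul_smul, Finset.sum_smul]
  exact Finset.sum_comm

lemma norm_sum_smul_le_sum_mul {E ι : Type*} [SeminormedAddCommGroup E] [NormedSpace ℝ E]
    [Fintype ι] {c : ι → ℝ} {z : ι → E} {η : ℝ} (hc : ∀ i, 0 ≤ c i) (hz : ∀ i, ‖z i‖ ≤ η) :
    ‖∑ i, c i • z i‖ ≤ (∑ i, c i) * η := by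
  rw [Finset.sum_mul]
  refine norm_sum_le_of_le _ fun i _ => ?_
  rw [norm_smul, Real.norm_of_nonneg (hc i)]
  exact mul_le_mul_of_nonneg_left (hz i) (hc i)

namespace OrthonormalBasis

variable {E ι : Type*} [NormedAddCommGroup E] [InnerProductSpace ℝ E] [Fintype ι]

lemma norm_sum_smul_sq (ψ : OrthonormalBasis ι ℝ E) (d : ι → ℝ) :
    ‖∑ k, d k • ψ k‖ ^ 2 = ∑ k, d k ^ 2 := by
  rw [ψ.sum_repr_symm, LinearIsometryEquiv.norm_map, EuclideanSpace.real_norm_sq_eq]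

lemma norm_sum_smul_inner_smul_le (ψ : OrthonormalBasis ι ℝ E) (φ : E) {g : ι → ℝ} {ε : ℝ}
    (hg : ∀ k, |g k| ≤ ε) :
    ‖∑ k, g k • (⟪φ, ψ k⟫ • ψ k)‖ ≤ ε * ‖φ‖ := by
  rcases isEmpty_or_nonempty ι with hι | ⟨⟨k₀⟩⟩
  · have hφ : φ = 0 := by simpa using (ψ.sum_repr' φ).symm
    simp [hφ]
  have hε : 0 ≤ ε := (abs_nonneg _).trans (hg k₀)
  refine (pow_le_pow_iff_left₀ (norm_nonneg _) (by positivity) two_ne_zero).mp ?_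
  simp_rw [smul_smul]
  rw [norm_sum_smul_sq, mul_pow, ← ψ.sum_sq_inner_left, Finset.mul_sum]
  refine Finset.sum_le_sum fun k _ => ?_
  rw [mul_pow]
  exact mul_le_mul_of_nonneg_right (sq_le_sq.mpr ((hg k).trans (le_abs_self ε))) (sq_nonneg _)

end OrthonormalBasis

lemma exp_mul_exp_shift (b δ x : ℝ) :
    Real.exp (-b * δ) * Real.exp (-b * (x - δ)) = Real.exp (-b * x) := by
  rw [← Real.exp_add]
  ring_nf

theorem stmt18_general
    {H : Type*} [NormedAddCommGroup H] [InnerProductSpace ℝ H]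
    (K : ℕ) (ψ : OrthonormalBasis (Fin K) ℝ H) (lam : Fin K → ℝ)
    (δ : ℝ)
    (f : ℝ → ℝ)
    (m : ℕ) (a b : Fin m → ℝ) (ha : ∀ i, 0 < a i)
    (ε ε₀ : ℝ)
    (happrox : ∀ k,
      |(∑ i, a i * Real.exp (-(b i) * lam k)) - (f (lam k))⁻¹| ≤ ε)
    (φ : H) (w wt : Fin m → H)
    (hw : ∀ i, w i = ∑ k, Real.exp (-(b i) * (lam k - δ)) • (⟪φ, ψ k⟫ • ψ k))
    (hwt : ∀ i, ‖wt i - w i‖ ≤ ε₀ * ‖φ‖)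
    (u : H) (hu : u = ∑ k, (f (lam k))⁻¹ • (⟪φ, ψ k⟫ • ψ k)) :
    ‖(∑ i, (a i * Real.exp (-(b i) * δ)) • wt i) - u‖
      ≤ (ε + ε₀ * (∑ i, a i * Real.exp (-(b i) * δ))) * ‖φ‖ := by
  set c : Fin m → ℝ := fun i => a i * Real.exp (-(b i) * δ)
  have hc : ∀ i, 0 ≤ c i := fun i => (mul_pos (ha i) (Real.exp_pos _)).le
  have hexact : ∑ i, c i • w i - u = ∑ k,
      ((∑ i, a i * Real.exp (-(b i) * lam k)) - (f (lam k))⁻¹) • (⟪φ, ψ k⟫ • ψ k) := by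
    simp_rw [hw, hu, Finset.sum_smul_sum_smul_comm, c, mul_assoc, exp_mul_exp_shift, sub_smul,
      Finset.sum_sub_distrib]
  have hsplit : ∑ i, c i • wt i - u = ∑ i, c i • (wt i - w i) + (∑ i, c i • w i - u) := by
    simp [smul_sub, Finset.sum_sub_distrib]
  calc ‖∑ i, c i • wt i - u‖
      ≤ ‖∑ i, c i • (wt i - w i)‖ + ‖∑ i, c i • w i - u‖ := hsplit ▸ norm_add_le _ _
    _ ≤ (∑ i, c i) * (ε₀ * ‖φ‖) + ε * ‖φ‖ := by
      gcongr
      · exact norm_sum_smul_le_sum_mul hc hwt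
      · exact hexact ▸ ψ.norm_sum_smul_inner_smul_le φ happrox
    _ = (ε + ε₀ * ∑ i, c i) * ‖φ‖ := by ring

/-- Error estimate for the exponential-sums (ES) approximation with inexact
evolutionary solves: `‖ũ̃ − f(A)⁻¹ φ‖ ≤ (ε + ε₀ r(δ)) ‖φ‖`. -/
theorem stmt18
    {H : Type*} [NormedAddCommGroup H] [InnerProductSpace ℝ H] [FiniteDimensional ℝ H]
    (K : ℕ) (ψ : OrthonormalBasis (Fin K) ℝ H) (lam : Fin K → ℝ)
    (δ : ℝ) (hδ : 0 < δ) (hlam : ∀ k, δ ≤ lam k)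
    (f : ℝ → ℝ) (hf : ∀ k, 0 < f (lam k))
    (m : ℕ) (a b : Fin m → ℝ) (ha : ∀ i, 0 < a i) (hb : ∀ i, 0 < b i)
    (ε ε₀ : ℝ)
    (happrox : ∀ k,
      |(∑ i, a i * Real.exp (-(b i) * lam k)) - (f (lam k))⁻¹| ≤ ε)
    (φ : H) (w wt : Fin m → H)
    (hw : ∀ i, w i = ∑ k, Real.exp (-(b i) * (lam k - δ)) • (⟪φ, ψ k⟫ • ψ k))
    (hwt : ∀ i, ‖wt i - w i‖ ≤ ε₀ * ‖φ‖)
    (u : H) (hu : u = ∑ k, (f (lam k))⁻¹ • (⟪φ, ψ k⟫ • ψ k)) :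
    ‖(∑ i, (a i * Real.exp (-(b i) * δ)) • wt i) - u‖
      ≤ (ε + ε₀ * (∑ i, a i * Real.exp (-(b i) * δ))) * ‖φ‖ :=
  stmt18_general K ψ lam δ f m a b ha ε ε₀ happrox φ w wt hw hwt u hu
end
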